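/- arXiv:1212.3176 — 2 statements merged into one kernel-verified Lean document; each statement's English description precedes it below -/
import Mathlib

section
/- Let Y be a set, C a compact Hausdorff space, and f : Y → C a map such that for any two disjoint closed subsets C₁, C₂ of C there is a set Y' in a fixed Boolean algebra B of subsets of Y with f⁻¹(C₁) ⊆ Y' and Y' ∩ f⁻¹(C₂) = ∅. Then f extends uniquely to a continuous map f* from the Stone space of B to C, where Y maps to the Stone space via principal ultrafilters, and f*(p) is the unique point in the intersection over Y' ∈ p of the closures of f(Y'). -/
/-- `B` is a Boolean algebra of subsets of `α`. -/
def IsBoolAlgOn {α : Type*} (B : Set (Set α)) : Prop :=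
  Set.univ ∈ B ∧ (∀ A ∈ B, Aᶜ ∈ B) ∧ ∀ A ∈ B, ∀ A' ∈ B, A ∩ A' ∈ B

/-- `p` is an ultrafilter on the Boolean algebra `B` of subsets. -/
def IsUltraOn {α : Type*} (B p : Set (Set α)) : Prop :=
  p ⊆ B ∧ Set.univ ∈ p ∧ ∅ ∉ p ∧ (∀ Y ∈ p, ∀ Z ∈ p, Y ∩ Z ∈ p) ∧
    (∀ Y ∈ p, ∀ Z ∈ B, Y ⊆ Z → Z ∈ p) ∧ ∀ Y ∈ B, Y ∈ p ∨ Yᶜ ∈ p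

/-- The Stone space of the Boolean algebra `B`: the set of ultrafilters on `B`. -/
abbrev StoneS {α : Type*} (B : Set (Set α)) : Type _ := {p : Set (Set α) // IsUltraOn B p}

/-- The Stone topology, generated by the basic (cl)open sets `{p : A ∈ p}`, `A ∈ B`. -/
instance stoneTop {α : Type*} (B : Set (Set α)) : TopologicalSpace (StoneS B) :=
  TopologicalSpace.generateFrom {U | ∃ A ∈ B, U = {p : StoneS B | A ∈ p.1}}

/-- `f : α → C` is `B`-definable: preimages of disjoint closed sets are separated by a
member of `B`. -/
def BDefinable {α C : Type*} [TopologicalSpace C] (B : Set (Set α)) (f : α → C) : Prop :=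
  ∀ C₁ C₂ : Set C, IsClosed C₁ → IsClosed C₂ → Disjoint C₁ C₂ →
    ∃ A ∈ B, f ⁻¹' C₁ ⊆ A ∧ A ∩ f ⁻¹' C₂ = ∅

/-!
For an ultrafilter `p` on `B`, the sets `closure (f '' A)` with `A ∈ p` form a directed family of
nonempty closed sets, so by compactness they have a common point. Definability makes that point
unique: distinct points have neighbourhoods with disjoint closures, a member `A ∈ B` separates
their preimages, and whichever of `A`, `Aᶜ` lies in `p` has an image avoiding a neighbourhood of
one of the two points. The same separation, applied to a point and the complement of a
neighbourhood of it, shows that the basic open set `{q | A ∈ q}` is mapped into that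
neighbourhood, so the resulting map is continuous. It sends the principal ultrafilter of `y` to
`f y`, and principal ultrafilters are dense in the Stone space, which gives uniqueness.
-/

open Set Filter Topology

namespace IsUltraOn

variable {α : Type*} {B p : Set (Set α)} {A A' : Set α}

lemma mem_boolAlg (hp : IsUltraOn B p) (hA : A ∈ p) : A ∈ B := hp.1 hA

lemma univ_mem (hp : IsUltraOn B p) : univ ∈ p := hp.2.1

lemma nonempty_of_mem (hp : IsUltraOn B p) (hA : A ∈ p) : A.Nonempty :=
  nonempty_iff_ne_empty.2 fun h => hp.2.2.1 (h ▸ hA)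

lemma inter_mem (hp : IsUltraOn B p) (hA : A ∈ p) (hA' : A' ∈ p) : A ∩ A' ∈ p :=
  hp.2.2.2.1 A hA A' hA'

lemma mem_of_superset (hp : IsUltraOn B p) (hA : A ∈ p) (hA' : A' ∈ B) (h : A ⊆ A') : A' ∈ p :=
  hp.2.2.2.2.1 A hA A' hA' h

lemma mem_or_compl_mem (hp : IsUltraOn B p) (hA : A ∈ B) : A ∈ p ∨ Aᶜ ∈ p :=
  hp.2.2.2.2.2 A hA

end IsUltraOn

lemma isUltraOn_principal {α : Type*} {B : Set (Set α)} (hB : IsBoolAlgOn B) (y : α) :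
    IsUltraOn B {A | A ∈ B ∧ y ∈ A} := by
  obtain ⟨huniv, hcompl, hinter⟩ := hB
  refine ⟨fun A hA => hA.1, ⟨huniv, trivial⟩, fun h => h.2, ?_, ?_, ?_⟩
  · exact fun A hA A' hA' => ⟨hinter A hA.1 A' hA'.1, hA.2, hA'.2⟩
  · exact fun A hA A' hA' h => ⟨hA', h hA.2⟩
  · intro A hA
    by_cases hy : y ∈ A
    · exact Or.inl ⟨hA, hy⟩
    · exact Or.inr ⟨hcompl A hA, hy⟩

namespace StoneS

variable {α : Type*} {B : Set (Set α)}

lemma isOpen_setOf_mem {A : Set α} (hA : A ∈ B) : IsOpen {q : StoneS B | A ∈ q.1} :=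
  TopologicalSpace.isOpen_generateFrom_of_mem ⟨A, hA, rfl⟩

lemma hasBasis_nhds (p : StoneS B) :
    (𝓝 p).HasBasis (fun A => A ∈ p.1) (fun A => {q : StoneS B | A ∈ q.1}) := by
  rw [TopologicalSpace.nhds_generateFrom]
  refine (hasBasis_biInf_principal (s := id) ?_ ?_).to_hasBasis ?_ ?_
  · rintro _ ⟨hp₁, A₁, -, rfl⟩ _ ⟨hp₂, A₂, -, rfl⟩
    have h₁₂ := p.2.inter_mem hp₁ hp₂
    refine ⟨_, ⟨h₁₂, A₁ ∩ A₂, p.2.mem_boolAlg h₁₂, rfl⟩, ?_, ?_⟩ <;> intro q hq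
    · exact q.2.mem_of_superset hq (p.2.mem_boolAlg hp₁) inter_subset_left
    · exact q.2.mem_of_superset hq (p.2.mem_boolAlg hp₂) inter_subset_right
  · exact ⟨_, p.2.univ_mem, univ, p.2.mem_boolAlg p.2.univ_mem, rfl⟩
  · rintro _ ⟨hp, A, -, rfl⟩
    exact ⟨A, hp, subset_rfl⟩
  · exact fun A hA => ⟨_, ⟨hA, A, p.2.mem_boolAlg hA, rfl⟩, subset_rfl⟩

lemma dense_principal (hB : IsBoolAlgOn B) :
    Dense {p : StoneS B | ∃ y : α, p.1 = {A | A ∈ B ∧ y ∈ A}} := fun p =>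
  (mem_closure_iff_nhds_basis (hasBasis_nhds p)).2 fun _ hA =>
    let ⟨y, hy⟩ := p.2.nonempty_of_mem hA
    ⟨⟨_, isUltraOn_principal hB y⟩, ⟨y, rfl⟩, p.2.mem_boolAlg hA, hy⟩

lemma eq_of_eq_on_principal {X : Type*} [TopologicalSpace X] [T2Space X] (hB : IsBoolAlgOn B)
    (g : α → X) {G H : StoneS B → X} (hG : Continuous G) (hH : Continuous H)
    (hGg : ∀ (y : α) (p : StoneS B), p.1 = {A | A ∈ B ∧ y ∈ A} → G p = g y)
    (hHg : ∀ (y : α) (p : StoneS B), p.1 = {A | A ∈ B ∧ y ∈ A} → H p = g y) : G = H :=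
  hG.ext_on (dense_principal hB) hH fun _ ⟨y, hy⟩ => (hGg y _ hy).trans (hHg y _ hy).symm

end StoneS

lemma BDefinable.exists_separating {α C : Type*} [TopologicalSpace C] {B : Set (Set α)}
    {f : α → C} (hf : BDefinable B f) {N₁ N₂ : Set C} (hN₁ : IsClosed N₁) (hN₂ : IsClosed N₂)
    (hN : Disjoint N₁ N₂) : ∃ A ∈ B, Disjoint (f '' Aᶜ) N₁ ∧ Disjoint (f '' A) N₂ := by
  obtain ⟨A, hA, h₁, h₂⟩ := hf N₁ N₂ hN₁ hN₂ hN
  exact ⟨A, hA, disjoint_image_left.2 (disjoint_compl_left_iff_subset.2 h₁),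
    disjoint_image_left.2 (disjoint_iff_inter_eq_empty.2 h₂)⟩

section LimitSet

variable {α C : Type*} [TopologicalSpace C] {B : Set (Set α)} (f : α → C)

def limitSet (p : Set (Set α)) : Set C := ⋂ A ∈ p, closure (f '' A)

variable {f} {p : Set (Set α)} {A : Set α}

lemma notMem_limitSet {N : Set C} {c : C} (hA : A ∈ p) (hN : N ∈ 𝓝 c)
    (hAN : Disjoint (f '' A) N) : c ∉ limitSet f p := fun hc =>
  (mem_closure_iff_nhds.1 (mem_iInter₂.1 hc A hA) N hN).ne_empty hAN.symm.inter_eq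

lemma apply_mem_limitSet {y : α} (hy : ∀ A ∈ p, y ∈ A) : f y ∈ limitSet f p :=
  mem_iInter₂.2 fun A hA => subset_closure (mem_image_of_mem f (hy A hA))

lemma limitSet_nonempty [CompactSpace C] (hp : IsUltraOn B p) : (limitSet f p).Nonempty := by
  have : Nonempty p := ⟨⟨univ, hp.univ_mem⟩⟩
  rw [limitSet, biInter_eq_iInter]
  refine IsCompact.nonempty_iInter_of_directed_nonempty_isCompact_isClosed _
    (fun A A' => ⟨⟨_, hp.inter_mem A.2 A'.2⟩, ?_, ?_⟩)
    (fun A => ((hp.nonempty_of_mem A.2).image f).closure)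
    (fun _ => isClosed_closure.isCompact) (fun _ => isClosed_closure)
  all_goals exact closure_mono (image_mono (by simp))

lemma limitSet_subsingleton [T25Space C] (hf : BDefinable B f) (hp : IsUltraOn B p) :
    (limitSet f p).Subsingleton := by
  intro c₁ hc₁ c₂ hc₂
  by_contra hne
  obtain ⟨N₁, hN₁, N₂, hN₂, hN⟩ := exists_nhds_disjoint_closure hne
  obtain ⟨A, hA, hAc₁, hA₂⟩ := hf.exists_separating isClosed_closure isClosed_closure hN
  rcases hp.mem_or_compl_mem hA with hAp | hAp
  · exact notMem_limitSet hAp hN₂ (hA₂.mono_right subset_closure) hc₂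
  · exact notMem_limitSet hAp hN₁ (hAc₁.mono_right subset_closure) hc₁

end LimitSet

section StoneExtend

variable {α C : Type*} [TopologicalSpace C] [CompactSpace C] {B : Set (Set α)} (f : α → C)

noncomputable def stoneExtend (p : StoneS B) : C := (limitSet_nonempty (f := f) p.2).some

lemma stoneExtend_mem_limitSet (p : StoneS B) : stoneExtend f p ∈ limitSet f p.1 :=
  (limitSet_nonempty (f := f) p.2).some_mem

variable [T2Space C] {f}

lemma limitSet_eq_singleton (hf : BDefinable B f) (p : StoneS B) :
    limitSet f p.1 = {stoneExtend f p} :=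
  (limitSet_subsingleton hf p.2).eq_singleton_of_mem (stoneExtend_mem_limitSet f p)

lemma stoneExtend_principal (hf : BDefinable B f) (y : α) (p : StoneS B)
    (hp : p.1 = {A | A ∈ B ∧ y ∈ A}) : stoneExtend f p = f y :=
  limitSet_subsingleton hf p.2 (stoneExtend_mem_limitSet f p)
    (apply_mem_limitSet fun A hA => (hp ▸ hA : A ∈ {A | A ∈ B ∧ y ∈ A}).2)

lemma continuous_stoneExtend (hf : BDefinable B f) : Continuous (stoneExtend (B := B) f) := by
  refine continuous_iff_continuousAt.2 fun p => ?_
  rw [ContinuousAt, (closed_nhds_basis _).tendsto_right_iff]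
  rintro N ⟨hN, hNc⟩
  obtain ⟨N', ⟨hN', hN'c⟩, hN'N⟩ := (closed_nhds_basis _).mem_iff.1 (interior_mem_nhds.2 hN)
  obtain ⟨A, hA, hAc, hAN⟩ := hf.exists_separating hN'c isOpen_interior.isClosed_compl
    (disjoint_compl_right_iff_subset.2 hN'N)
  have hAp : A ∈ p.1 := (p.2.mem_or_compl_mem hA).resolve_right fun hAc' =>
    notMem_limitSet hAc' hN' hAc (stoneExtend_mem_limitSet f p)
  filter_upwards [(StoneS.isOpen_setOf_mem hA).mem_nhds hAp] with q hAq
  by_contra hqN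
  exact notMem_limitSet hAq (hNc.isOpen_compl.mem_nhds hqN)
    (hAN.mono_right (compl_subset_compl.2 interior_subset)) (stoneExtend_mem_limitSet f q)

end StoneExtend

/-- A `B`-definable map `f` from `Y` to a compact Hausdorff space `C` extends uniquely to
a continuous map on the Stone space of `B` (via principal ultrafilters), and the value of
any such extension at `p` is the unique point of `⋂_{A ∈ p} closure (f '' A)`. -/
theorem stmt_11 {α C : Type*} [TopologicalSpace C] [CompactSpace C] [T2Space C]
    (B : Set (Set α)) (hB : IsBoolAlgOn B) (f : α → C) (hf : BDefinable B f) :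
    (∃! F : StoneS B → C, Continuous F ∧
        ∀ (y : α) (p : StoneS B), p.1 = {A | A ∈ B ∧ y ∈ A} → F p = f y) ∧
      ∀ F : StoneS B → C, Continuous F →
        (∀ (y : α) (p : StoneS B), p.1 = {A | A ∈ B ∧ y ∈ A} → F p = f y) →
        ∀ p : StoneS B, ⋂ A ∈ p.1, closure (f '' A) = {F p} := by
  have hext : ∀ F : StoneS B → C, Continuous F →
      (∀ (y : α) (p : StoneS B), p.1 = {A | A ∈ B ∧ y ∈ A} → F p = f y) → F = stoneExtend f :=
    fun F hF hFf => StoneS.eq_of_eq_on_principal hB f hF (continuous_stoneExtend hf) hFf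
      (stoneExtend_principal hf)
  refine ⟨⟨stoneExtend f, ⟨continuous_stoneExtend hf, stoneExtend_principal hf⟩,
    fun F hF => hext F hF.1 hF.2⟩, fun F hF hFf p => ?_⟩
  rw [hext F hF hFf]
  exact limitSet_eq_singleton hf p
end

section
/- Let G and H be groups with H carrying a compact Hausdorff topological group structure, B a Boolean algebra of subsets of G closed under left and right translations, and f : G → H a group homomorphism that is B-definable (for disjoint closed C₁, C₂ ⊆ H there is Y ∈ B separating f⁻¹(C₁) from f⁻¹(C₂)). Then the unique continuous extension f* : S(B) → H of f to the Stone space satisfies: for ultrafilters p, q on B, f*(p) · f*(q) equals the unique point of ⋂_{Y∈p, Z∈q} closure(f(Y·Z)), where Y·Z = {yz : y ∈ Y, z ∈ Z}. -/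
open Pointwise

/-!
Since `f` is a homomorphism, `f '' (A * Z) = f '' A * f '' Z`, and in a compact group the
closure of a product of two sets is the product of their closures, because the latter product
is already closed. So the intersection is `⋂_{A ∈ p, Z ∈ q} closure (f '' A) * closure (f '' Z)`.
Both families of closures are directed downwards, as ultrafilters are closed under finite
intersections, and for directed families of closed sets in a compact group the intersection
of the pairwise products is the product of the intersections, namely `{F p} * {F q}`.
-/

section CompactGroup

variable {G : Type*} [Group G] [TopologicalSpace G] [IsTopologicalGroup G]

theorem closure_mul_eq_of_isCompact_closure {s : Set G} (hs : IsCompact (closure s))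
    (t : Set G) : closure (s * t) = closure s * closure t := by
  refine subset_antisymm ?_ ?_
  · exact closure_minimal (Set.mul_subset_mul subset_closure subset_closure)
      (isClosed_closure.mul_left_of_isCompact hs)
  · rintro _ ⟨a, ha, b, hb, rfl⟩
    exact map_mem_closure₂ continuous_mul ha hb fun x hx y hy => Set.mul_mem_mul hx hy

/-- The point `x` lies in `s i * t j` iff some `a ∈ s i` has `a⁻¹ * x ∈ t j`; compactness
produces one `a` that works for all `i` and `j` at once. -/
theorem iInter_mul_iInter_of_directed [CompactSpace G] {ι κ : Type*} [Nonempty ι] [Nonempty κ]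
    {s : ι → Set G} {t : κ → Set G} (hsd : Directed (· ⊇ ·) s) (htd : Directed (· ⊇ ·) t)
    (hsc : ∀ i, IsClosed (s i)) (htc : ∀ j, IsClosed (t j)) :
    ⋂ i, ⋂ j, s i * t j = (⋂ i, s i) * ⋂ j, t j := by
  refine subset_antisymm (fun x hx => ?_)
    (Set.subset_iInter₂ fun i j => Set.mul_subset_mul (Set.iInter_subset _ i)
      (Set.iInter_subset _ j))
  set u : ι × κ → Set G := fun ij => s ij.1 ∩ (fun a => a⁻¹ * x) ⁻¹' t ij.2
  have hu_closed : ∀ ij, IsClosed (u ij) := fun ij =>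
    (hsc ij.1).inter ((htc ij.2).preimage (by fun_prop))
  have hu_directed : Directed (· ⊇ ·) u := by
    rintro ⟨i, j⟩ ⟨i', j'⟩
    obtain ⟨i'', hi, hi'⟩ := hsd i i'
    obtain ⟨j'', hj, hj'⟩ := htd j j'
    exact ⟨(i'', j''), Set.inter_subset_inter hi (Set.preimage_mono hj),
      Set.inter_subset_inter hi' (Set.preimage_mono hj')⟩
  have hu_nonempty : ∀ ij, (u ij).Nonempty := by
    rintro ⟨i, j⟩
    obtain ⟨a, ha, b, hb, rfl⟩ := Set.mem_iInter₂.1 hx i j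
    exact ⟨a, ha, by simpa using hb⟩
  obtain ⟨a, ha⟩ := IsCompact.nonempty_iInter_of_directed_nonempty_isCompact_isClosed u
    hu_directed hu_nonempty (fun ij => (hu_closed ij).isCompact) hu_closed
  obtain ⟨i₀⟩ := ‹Nonempty ι›
  obtain ⟨j₀⟩ := ‹Nonempty κ›
  exact ⟨a, Set.mem_iInter.2 fun i => (Set.mem_iInter.1 ha (i, j₀)).1,
    a⁻¹ * x, Set.mem_iInter.2 fun j => (Set.mem_iInter.1 ha (i₀, j)).2, mul_inv_cancel_left a x⟩

end CompactGroup

theorem directed_closure_image {α X : Type*} [TopologicalSpace X] {p : Set (Set α)}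
    (hp : ∀ Y ∈ p, ∀ Z ∈ p, Y ∩ Z ∈ p) (g : α → X) :
    Directed (· ⊇ ·) fun A : p => closure (g '' A) := by
  rintro ⟨A, hA⟩ ⟨A', hA'⟩
  exact ⟨⟨A ∩ A', hp A hA A' hA'⟩, closure_mono (Set.image_mono Set.inter_subset_left),
    closure_mono (Set.image_mono Set.inter_subset_right)⟩

theorem stmt_13_general {G H : Type*} [Group G] [Group H] [TopologicalSpace H] [IsTopologicalGroup H]
    [CompactSpace H]
    (B : Set (Set G))
    (f : G →* H)
    (F : StoneS B → H)
    (hF : ∀ p : StoneS B, ⋂ A ∈ p.1, closure (⇑f '' A) = {F p}) :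
    ∀ p q : StoneS B,
      (⋂ A ∈ p.1, ⋂ Z ∈ q.1, closure (⇑f '' (A * Z))) = {F p * F q} := by
  intro p q
  obtain ⟨-, hpu, -, hpi, -⟩ := p.2
  obtain ⟨-, hqu, -, hqi, -⟩ := q.2
  have : Nonempty p.1 := ⟨⟨Set.univ, hpu⟩⟩
  have : Nonempty q.1 := ⟨⟨Set.univ, hqu⟩⟩
  calc (⋂ A ∈ p.1, ⋂ Z ∈ q.1, closure (⇑f '' (A * Z)))
      = ⋂ A : p.1, ⋂ Z : q.1, closure (⇑f '' A) * closure (⇑f '' Z) := by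
        simp_rw [Set.biInter_eq_iInter, Set.image_mul,
          closure_mul_eq_of_isCompact_closure isClosed_closure.isCompact]
    _ = (⋂ A : p.1, closure (⇑f '' A)) * ⋂ Z : q.1, closure (⇑f '' Z) :=
        iInter_mul_iInter_of_directed (directed_closure_image hpi f)
          (directed_closure_image hqi f) (fun _ => isClosed_closure) fun _ => isClosed_closure
    _ = {F p * F q} := by
        simp only [Set.biInter_eq_iInter] at hF
        rw [hF p, hF q, Set.singleton_mul_singleton]

/-- For a `B`-definable homomorphism `f : G → H` into a compact Hausdorff group, with `B`
closed under left and right translations, the continuous extension `F` to the Stone space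
(given by `{F p} = ⋂_{A ∈ p} closure (f '' A)`) satisfies
`{F p * F q} = ⋂_{A ∈ p, Z ∈ q} closure (f '' (A·Z))`. -/
theorem stmt_13 {G H : Type*} [Group G] [Group H] [TopologicalSpace H] [IsTopologicalGroup H]
    [CompactSpace H] [T2Space H]
    (B : Set (Set G)) (hB : IsBoolAlgOn B)
    (hBl : ∀ (g : G), ∀ Y ∈ B, (g * ·) '' Y ∈ B)
    (hBr : ∀ (g : G), ∀ Y ∈ B, (· * g) '' Y ∈ B)
    (f : G →* H) (hf : BDefinable B ⇑f)
    (F : StoneS B → H) (hFc : Continuous F)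
    (hF : ∀ p : StoneS B, ⋂ A ∈ p.1, closure (⇑f '' A) = {F p}) :
    ∀ p q : StoneS B,
      (⋂ A ∈ p.1, ⋂ Z ∈ q.1, closure (⇑f '' (A * Z))) = {F p * F q} :=
  stmt_13_general B f F hF
end
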